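/- (Theorem 1, constraint-violation bound.) Fix positive integers k, m, reals 0 < c̄, 0 < ā_max, 0 < κ, confidence levels η_1,…,η_m ∈ [1/2, 1), and reals 0 < d̲ ≤ d̄. There exists a constant C > 0, depending only on k, m, c̄, ā_max, κ, the η_j, d̲ and d̄, with the following property. Let n be any positive integer, let b ∈ ℝ^m with d̲ ≤ b_j/n ≤ d̄ for all j, and let (c_t, (ā_{tj})_{j=1}^m, (K_{tj})_{j=1}^m), t = 1,…,n, be i.i.d. random tuples where c_t ∈ [0, c̄]^k, each ā_{tj} ∈ [0, ā_max]^k, and each K_{tj} is a symmetric positive semidefinite k×k matrix with all entries bounded by κ. Let x_1, …, x_n ∈ {0,1}^k be the output of the online primal-dual algorithm: with ã_{tj} = ā_{tj} + (Φ^{-1}(η_j)/√n) γ_{tj} (γ_{tj} the vector of square roots of the diagonal entries of K_{tj}), Ã_t the m×k matrix with rows ã_{tj}ᵀ, and d = b/n, set p_1 = 0; at step t let v_t = max_{l=1,…,k} (c_tᵀ − p_tᵀ Ã_t) e_l, set x_t = e_{l_t} for the least maximizing index l_t if v_t > 0 and x_t = 0 otherwise, and update p_{t+1} = max{p_t + (1/√n)(Ã_t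 x_t − d), 0} componentwise. Define the second-order cone constraint functions g_j(x) = ∑_{t=1}^n ā_{tj}ᵀ x_t + Φ^{-1}(η_j) √(∑_{t=1}^n x_tᵀ K_{tj} x_t) for j = 1,…,m, and let g(x) − b ∈ ℝ^m have components g_j(x) − b_j. Then E[ ‖(g(x) − b)^+‖₂ ] ≤ C √n, where (·)^+ denotes the componentwise positive part and ‖·‖₂ the Euclidean norm on ℝ^m. -/

import Mathlib

/-!
The bound holds for every realisation of the data. Writing `ε = 1/√n`, each price update gives
`‖p_{t+1}‖² ≤ ‖p_t‖² + 2ε (c̄ − d̲ ∑_j p_{tj}) + ε² m (a + d̄)²`, where `a` bounds the entries of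
`Ã_t`: the algorithm only buys when the reduced revenue `c_t − p_tᵀÃ_t` is positive, so
`p_tᵀ Ã_t x_t ≤ c̄`. Hence `‖p_t‖²` cannot grow once `∑_j p_{tj}` is large, and the prices stay
bounded independently of `n`. As clipping at `0` only raises prices, `∑_t (Ã_t x_t − d) ≤ √n p_n`,
so the robust consumption overshoots `b` by `O(√n)`. Finally, with `s_t = γ_{tj}ᵀ x_t ∈ [0, √κ]`,
`g_j(x)` exceeds the robust consumption by `z_j (√(∑ s_t²) − ∑ s_t / √n) ≤ |z_j| √κ √n / 2`, and
the quantiles `z_j = Φ⁻¹(η_j)` are finite because `η_j ∈ (0, 1)`.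
-/

open MeasureTheory ProbabilityTheory Matrix Finset

/-- The data revealed at one step of the online problem: the revenue vector `c_t ∈ ℝ^k`,
the mean consumption vectors `ā_{tj} ∈ ℝ^k` (`j = 1,…,m`), and the covariance matrices
`K_{tj}` (`j = 1,…,m`), the latter encoded as functions `Fin k → Fin k → ℝ`. -/
abbrev RAPData (k m : ℕ) : Type :=
  (Fin k → ℝ) × (Fin m → (Fin k → ℝ)) × (Fin m → (Fin k → Fin k → ℝ))

open Classical in
/-- The primal decision of the online primal-dual algorithm given the score vector
`l ↦ (cᵀ − pᵀÃ)e_l`: if the maximal score `v` is positive, output the standard basis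
vector `e_l` for the least index `l` attaining the maximum; otherwise output `0`. -/
noncomputable def opdChoice {k : ℕ} (score : Fin k → ℝ) : Fin k → ℝ :=
  if h : ∃ l, (∀ l', score l' ≤ score l) ∧ 0 < score l then
    fun i => if i = (Finset.univ.filter fun l => ∀ l', score l' ≤ score l).min'
        ⟨h.choose, by simpa using h.choose_spec.1⟩ then 1 else 0
  else 0

/-- The dual price iterates of the online primal-dual algorithm: `p 0 = 0` and
`p (t+1) = max { p t + (1/√n)(Ã_t x_t − d), 0 }` componentwise, where
`x_t = opdChoice (l ↦ (c_tᵀ − p_tᵀ Ã_t) e_l)`. -/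
noncomputable def opdP {k m : ℕ} (n : ℕ) (c : ℕ → Fin k → ℝ)
    (Atil : ℕ → Matrix (Fin m) (Fin k) ℝ) (d : Fin m → ℝ) : ℕ → Fin m → ℝ
  | 0 => 0
  | t + 1 => fun j =>
      max (opdP n c Atil d t j +
        (1 / Real.sqrt n) *
          ((Atil t).mulVec
            (opdChoice fun l => c t l - ∑ j', opdP n c Atil d t j' * Atil t j' l) j
            - d j)) 0

/-- The primal decisions of the online primal-dual algorithm. -/
noncomputable def opdXseq {k m : ℕ} (n : ℕ) (c : ℕ → Fin k → ℝ)
    (Atil : ℕ → Matrix (Fin m) (Fin k) ℝ) (d : Fin m → ℝ) (t : ℕ) : Fin k → ℝ :=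
  opdChoice fun l => c t l - ∑ j, opdP n c Atil d t j * Atil t j l

/-- The output `x_1, …, x_n` of the online primal-dual algorithm (Algorithm 1) run on the
data sequence `data`, with `ã_{tj} = ā_{tj} + (z_j/√n) γ_{tj}` (where
`γ_{tj} l = √((K_{tj}) l l)`), `Ã_t` the matrix with rows `ã_{tj}ᵀ`, and `d = b/n`. -/
noncomputable def opdOutput {k m : ℕ} (n : ℕ) (z b : Fin m → ℝ)
    (data : Fin n → RAPData k m) (t : Fin n) : Fin k → ℝ :=
  opdXseq n
    (fun s => if h : s < n then (data ⟨s, h⟩).1 else 0)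
    (fun s => if h : s < n then
        Matrix.of (fun j l => (data ⟨s, h⟩).2.1 j l +
          (z j / Real.sqrt n) * Real.sqrt ((data ⟨s, h⟩).2.2 j l l))
      else 0)
    (fun j => b j / n) t

theorem exists_abs_le_of_measure_Iic_eq (μ : Measure ℝ) [IsProbabilityMeasure μ] {η : ℝ}
    (hη₀ : 0 < η) (hη₁ : η < 1) :
    ∃ Z, 0 ≤ Z ∧ ∀ w, μ (Set.Iic w) = ENNReal.ofReal η → |w| ≤ Z := by
  obtain ⟨a, ha⟩ := Filter.eventually_atBot.1
    ((tendsto_cdf_atBot μ).eventually (eventually_lt_nhds hη₀))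
  obtain ⟨b, hb⟩ := Filter.eventually_atTop.1
    ((tendsto_cdf_atTop μ).eventually (eventually_gt_nhds hη₁))
  refine ⟨max |a| |b|, by positivity, fun w hw => ?_⟩
  have hcdf : cdf μ w = η := by
    rw [cdf_eq_real, measureReal_def, hw, ENNReal.toReal_ofReal hη₀.le]
  have haw : a < w := lt_of_not_ge fun h => (ha w h).ne hcdf
  have hwb : w < b := lt_of_not_ge fun h => (hb w h).ne' hcdf
  rw [abs_le]
  constructor <;> linarith [neg_abs_le a, le_abs_self b, le_max_left |a| |b|,
    le_max_right |a| |b|]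

theorem sqrt_sum_sq_max_zero_le_sqrt_card_mul {ι : Type*} [Fintype ι] {y : ι → ℝ} {a : ℝ}
    (ha : 0 ≤ a) (hy : ∀ i, y i ≤ a) :
    √(∑ i, max (y i) 0 ^ 2) ≤ √(Fintype.card ι) * a := by
  calc √(∑ i, max (y i) 0 ^ 2) ≤ √(∑ _i : ι, a ^ 2) :=
        Real.sqrt_le_sqrt <| Finset.sum_le_sum fun i _ =>
          pow_le_pow_left₀ (le_max_right _ _) (max_le (hy i) ha) 2
    _ = √(Fintype.card ι) * a := by
        rw [Finset.sum_const, Finset.card_univ, nsmul_eq_mul, Real.sqrt_mul (Nat.cast_nonneg _),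
          Real.sqrt_sq ha]

/-- Cauchy–Schwarz gives the lower bound, and `∑ s² ≤ σ ∑ s` with AM–GM the upper one. -/
theorem sqrt_sum_sq_sub_sum_div_sqrt_card_mem {ι : Type*} [Fintype ι] {s : ι → ℝ} {σ : ℝ}
    (hs : ∀ i, s i ∈ Set.Icc 0 σ) :
    √(∑ i, s i ^ 2) - (∑ i, s i) / √(Fintype.card ι) ∈
      Set.Icc 0 (σ * √(Fintype.card ι) / 2) := by
  rcases isEmpty_or_nonempty ι with hι | hι
  · simp
  set Q := ∑ i, s i ^ 2
  set S := ∑ i, s i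
  set r := √(Fintype.card ι)
  have hr : 0 < r := Real.sqrt_pos.2 (Nat.cast_pos.2 Fintype.card_pos)
  obtain ⟨i₀⟩ := hι
  have hσ : 0 ≤ σ := (hs i₀).1.trans (hs i₀).2
  have hQS : Q ≤ σ * S := by
    rw [Finset.mul_sum]
    exact Finset.sum_le_sum fun i _ => by
      rw [sq]; exact mul_le_mul_of_nonneg_right (hs i).2 (hs i).1
  have hSQ : S ≤ r * √Q := by
    rw [← Real.sqrt_mul (Nat.cast_nonneg _)]
    refine Real.le_sqrt_of_sq_le ?_
    simpa using sq_sum_le_card_mul_sum_sq (s := Finset.univ) (f := s)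
  have hS : 0 ≤ S := Finset.sum_nonneg fun i _ => (hs i).1
  have hq : √Q ^ 2 = Q := Real.sq_sqrt (Finset.sum_nonneg fun i _ => sq_nonneg (s i))
  have hamgm : √Q * r ≤ S + σ * r ^ 2 / 2 := by
    nlinarith [Real.sqrt_nonneg Q, mul_nonneg hσ (sq_nonneg r), sq_nonneg (S - σ * r ^ 2 / 2)]
  rw [show √Q - S / r = (√Q * r - S) / r by field_simp, Set.mem_Icc, div_nonneg_iff,
    div_le_iff₀ hr]
  constructor
  · left; constructor <;> linarith
  · nlinarith

/-- `(2c + M) / (2δ)` is the level of `S` above which the step has negative drift. -/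
noncomputable def driftBound (c M δ : ℝ) : ℝ := ((2 * c + M) / (2 * δ)) ^ 2 + 2 * c + M

theorem le_driftBound_of_step {f S : ℕ → ℝ} {ε c M δ : ℝ} (hε₀ : 0 ≤ ε) (hε₁ : ε ≤ 1)
    (hc : 0 ≤ c) (hM : 0 ≤ M) (hδ : 0 < δ) (hS : ∀ t, 0 ≤ S t) (hfS : ∀ t, f t ≤ S t ^ 2)
    (h0 : f 0 = 0) (hstep : ∀ t, f (t + 1) ≤ f t + 2 * ε * (c - δ * S t) + ε ^ 2 * M) :
    ∀ t, f t ≤ driftBound c M δ := by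
  intro t
  induction t with
  | zero => rw [h0, driftBound]; positivity
  | succ t ih =>
    rcases le_or_gt (S t) ((2 * c + M) / (2 * δ)) with hsmall | hlarge
    · have hf : f t ≤ ((2 * c + M) / (2 * δ)) ^ 2 :=
        (hfS t).trans (pow_le_pow_left₀ (hS t) hsmall 2)
      have hεc : 2 * ε * (c - δ * S t) ≤ 2 * c := by
        nlinarith [mul_nonneg hδ.le (hS t), mul_nonneg hε₀ (mul_nonneg hδ.le (hS t))]
      rw [driftBound]
      nlinarith [hstep t, mul_le_of_le_one_left hM hε₁]
    · have hdrift : 2 * δ * S t > 2 * c + M := by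
        rw [div_lt_iff₀ (by positivity)] at hlarge; linarith
      have hεM : ε ^ 2 * M ≤ ε * M := by
        rw [sq, mul_assoc]; exact mul_le_of_le_one_left (by positivity) hε₁
      nlinarith [hstep t]

def IsSelection {ι : Type*} [DecidableEq ι] (x : ι → ℝ) : Prop :=
  x = 0 ∨ ∃ l, x = Pi.single l 1

/-- The paper's `γ_{tj}` is `diagSqrt K_{tj}`. -/
noncomputable def diagSqrt {ι : Type*} (K : ι → ι → ℝ) : ι → ℝ := fun l => √(K l l)

namespace IsSelection

variable {ι : Type*} [Fintype ι] [DecidableEq ι] {x : ι → ℝ}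

theorem dotProduct_mem_Icc (hx : IsSelection x) {v : ι → ℝ} {σ : ℝ} (hσ : 0 ≤ σ)
    (hv : ∀ l, v l ∈ Set.Icc 0 σ) : v ⬝ᵥ x ∈ Set.Icc 0 σ := by
  rcases hx with rfl | ⟨l, rfl⟩
  · simpa using hσ
  · simpa using hv l

theorem abs_mulVec_le (hx : IsSelection x) {κ : Type*} {M : Matrix κ ι ℝ} {j : κ} {A : ℝ}
    (hA : 0 ≤ A) (hM : ∀ l, |M j l| ≤ A) : |(M *ᵥ x) j| ≤ A := by
  rcases hx with rfl | ⟨l, rfl⟩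
  · simpa using hA
  · simpa [mulVec_single_one] using hM l

theorem dotProduct_mulVec_eq_sq (hx : IsSelection x) {K : ι → ι → ℝ} (hK : ∀ l, 0 ≤ K l l) :
    x ⬝ᵥ (of K *ᵥ x) = (diagSqrt K ⬝ᵥ x) ^ 2 := by
  rcases hx with rfl | ⟨l, rfl⟩
  · simp
  · simp [diagSqrt, Real.sq_sqrt (hK l)]

end IsSelection

theorem opdChoice_spec {k : ℕ} (score : Fin k → ℝ) :
    IsSelection (opdChoice score) ∧ 0 ≤ score ⬝ᵥ opdChoice score := by
  classical
  unfold opdChoice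
  split_ifs with h
  · set L := (Finset.univ.filter fun l => ∀ l', score l' ≤ score l).min'
      ⟨h.choose, by simpa using h.choose_spec.1⟩
    have hL : ∀ l', score l' ≤ score L := by
      simpa using Finset.min'_mem (Finset.univ.filter fun l => ∀ l', score l' ≤ score l) _
    have hsingle : (fun i => if i = L then (1 : ℝ) else 0) = Pi.single L 1 := by
      ext i; simp [Pi.single_apply]
    rw [hsingle]
    refine ⟨Or.inr ⟨L, rfl⟩, ?_⟩
    simpa using (h.choose_spec.2.trans_le (hL _)).le
  · exact ⟨Or.inl rfl, by simp⟩

section Algorithm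

variable {k m : ℕ} (n : ℕ) (c : ℕ → Fin k → ℝ) (Atil : ℕ → Matrix (Fin m) (Fin k) ℝ)
  (d : Fin m → ℝ)

theorem opdP_succ (t : ℕ) (j : Fin m) :
    opdP n c Atil d (t + 1) j =
      max (opdP n c Atil d t j + 1 / √n * ((Atil t *ᵥ opdXseq n c Atil d t) j - d j)) 0 :=
  rfl

theorem opdP_nonneg : ∀ t j, 0 ≤ opdP n c Atil d t j
  | 0, _ => le_rfl
  | t + 1, j => (opdP_succ n c Atil d t j).symm ▸ le_max_right _ 0

theorem opdXseq_spec (t : ℕ) :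
    IsSelection (opdXseq n c Atil d t) ∧
      opdP n c Atil d t ⬝ᵥ (Atil t *ᵥ opdXseq n c Atil d t) ≤ c t ⬝ᵥ opdXseq n c Atil d t := by
  obtain ⟨hsel, hscore⟩ := opdChoice_spec (c t - opdP n c Atil d t ᵥ* Atil t)
  refine ⟨hsel, ?_⟩
  rw [dotProduct_mulVec, ← sub_nonneg, ← sub_dotProduct]
  exact hscore

variable {n c Atil d} {cbar A dlow dhigh : ℝ}

theorem sum_sq_opdP_succ_le (hcbar : 0 ≤ cbar) (hc : ∀ t l, c t l ∈ Set.Icc 0 cbar)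
    (hA : 0 ≤ A) (hAtil : ∀ t j l, |Atil t j l| ≤ A) (hdlow : 0 ≤ dlow)
    (hd : ∀ j, d j ∈ Set.Icc dlow dhigh) (t : ℕ) :
    ∑ j, opdP n c Atil d (t + 1) j ^ 2 ≤ ∑ j, opdP n c Atil d t j ^ 2
      + 2 * (1 / √n) * (cbar - dlow * ∑ j, opdP n c Atil d t j)
      + (1 / √n) ^ 2 * (m * (A + dhigh) ^ 2) := by
  set p := opdP n c Atil d t
  set x := opdXseq n c Atil d t
  set ε := 1 / √n
  have hε : 0 ≤ ε := by positivity
  obtain ⟨hsel, hpx⟩ := opdXseq_spec n c Atil d t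
  have hcx : c t ⬝ᵥ x ≤ cbar := (hsel.dotProduct_mem_Icc hcbar (hc t)).2
  have hpd : dlow * ∑ j, p j ≤ p ⬝ᵥ d := by
    rw [Finset.mul_sum]
    exact Finset.sum_le_sum fun j _ =>
      by rw [mul_comm]; exact mul_le_mul_of_nonneg_left (hd j).1 (opdP_nonneg n c Atil d t j)
  have hcross : ∑ j, p j * (ε * ((Atil t *ᵥ x) j - d j)) ≤ ε * (cbar - dlow * ∑ j, p j) := by
    have hexpand : ∑ j, p j * (ε * ((Atil t *ᵥ x) j - d j))
        = ε * (p ⬝ᵥ (Atil t *ᵥ x) - p ⬝ᵥ d) := by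
      simp only [dotProduct, Finset.mul_sum, ← Finset.sum_sub_distrib]
      exact Finset.sum_congr rfl fun j _ => by ring
    rw [hexpand]
    exact mul_le_mul_of_nonneg_left (by linarith) hε
  have hincr : ∀ j, (ε * ((Atil t *ᵥ x) j - d j)) ^ 2 ≤ ε ^ 2 * (A + dhigh) ^ 2 := by
    intro j
    have hAx := abs_le.1 (hsel.abs_mulVec_le hA (hAtil t j))
    have hdj := hd j
    rw [mul_pow]
    exact mul_le_mul_of_nonneg_left
      (sq_le_sq' (by linarith [hdj.1, hdj.2]) (by linarith [hdj.1, hdj.2])) (sq_nonneg ε)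
  calc ∑ j, opdP n c Atil d (t + 1) j ^ 2
      ≤ ∑ j, (p j + ε * ((Atil t *ᵥ x) j - d j)) ^ 2 :=
        Finset.sum_le_sum fun j _ => by
          rw [opdP_succ]
          rcases le_total 0 (p j + ε * ((Atil t *ᵥ x) j - d j)) with h | h
          · rw [max_eq_left h]
          · rw [max_eq_right h, sq (0 : ℝ), mul_zero]; exact sq_nonneg _
    _ = ∑ j, p j ^ 2 + 2 * ∑ j, p j * (ε * ((Atil t *ᵥ x) j - d j))
          + ∑ j, (ε * ((Atil t *ᵥ x) j - d j)) ^ 2 := by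
        simp only [add_sq, Finset.sum_add_distrib, Finset.mul_sum, mul_assoc]
    _ ≤ ∑ j, p j ^ 2 + 2 * ε * (cbar - dlow * ∑ j, p j) + ε ^ 2 * (m * (A + dhigh) ^ 2) := by
        have hsq : ∑ j, (ε * ((Atil t *ᵥ x) j - d j)) ^ 2 ≤ ε ^ 2 * (m * (A + dhigh) ^ 2) :=
          calc _ ≤ ∑ _j : Fin m, ε ^ 2 * (A + dhigh) ^ 2 := Finset.sum_le_sum fun j _ => hincr j
            _ = _ := by simp only [Finset.sum_const, Finset.card_univ, Fintype.card_fin,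
                  nsmul_eq_mul]; ring
        linarith

theorem sum_sq_opdP_le (hn : 0 < n) (hcbar : 0 ≤ cbar) (hc : ∀ t l, c t l ∈ Set.Icc 0 cbar)
    (hA : 0 ≤ A) (hAtil : ∀ t j l, |Atil t j l| ≤ A) (hdlow : 0 < dlow)
    (hd : ∀ j, d j ∈ Set.Icc dlow dhigh) (t : ℕ) :
    ∑ j, opdP n c Atil d t j ^ 2 ≤ driftBound cbar (m * (A + dhigh) ^ 2) dlow :=
  le_driftBound_of_step (by positivity)
    (div_le_one_of_le₀ (Real.one_le_sqrt.2 (Nat.one_le_cast.2 hn)) (Real.sqrt_nonneg _))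
    hcbar (by positivity) hdlow
    (fun t => Finset.sum_nonneg fun j _ => opdP_nonneg n c Atil d t j)
    (fun t => Finset.sum_sq_le_sq_sum_of_nonneg fun j _ => opdP_nonneg n c Atil d t j)
    (by simp [opdP]) (sum_sq_opdP_succ_le hcbar hc hA hAtil hdlow.le hd) t

variable (c Atil d) in
/-- The clipping at `0` only raises the prices, so they dominate the accumulated overspending. -/
theorem sum_range_mulVec_opdXseq_sub_le (hn : 0 < n) (T : ℕ) (j : Fin m) :
    ∑ t ∈ Finset.range T, ((Atil t *ᵥ opdXseq n c Atil d t) j - d j)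
      ≤ √n * opdP n c Atil d T j := by
  have hsn : 0 < √n := Real.sqrt_pos.2 (Nat.cast_pos.2 hn)
  calc ∑ t ∈ Finset.range T, ((Atil t *ᵥ opdXseq n c Atil d t) j - d j)
      = ∑ t ∈ Finset.range T,
          √n * (1 / √n * ((Atil t *ᵥ opdXseq n c Atil d t) j - d j)) :=
        Finset.sum_congr rfl fun t _ => by field_simp
    _ ≤ ∑ t ∈ Finset.range T, √n * (opdP n c Atil d (t + 1) j - opdP n c Atil d t j) :=
        Finset.sum_le_sum fun t _ => mul_le_mul_of_nonneg_left
          (le_sub_iff_add_le'.2 ((le_max_left _ _).trans (opdP_succ n c Atil d t j).ge)) hsn.le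
    _ = √n * opdP n c Atil d T j := by
        rw [← Finset.mul_sum, Finset.sum_range_sub (fun t => opdP n c Atil d t j)]
        simp [opdP]

end Algorithm

section Output

variable {k m n : ℕ}

noncomputable def opdRevenue (data : Fin n → RAPData k m) : ℕ → Fin k → ℝ :=
  fun s => if h : s < n then (data ⟨s, h⟩).1 else 0

noncomputable def opdRobustMatrix (z : Fin m → ℝ) (data : Fin n → RAPData k m) :
    ℕ → Matrix (Fin m) (Fin k) ℝ :=
  fun s => if h : s < n then
      of fun j l => (data ⟨s, h⟩).2.1 j l + z j / √n * √((data ⟨s, h⟩).2.2 j l l)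
    else 0

theorem opdOutput_eq (z b : Fin m → ℝ) (data : Fin n → RAPData k m) (t : Fin n) :
    opdOutput n z b data t =
      opdXseq n (opdRevenue data) (opdRobustMatrix z data) (fun j => b j / n) t :=
  rfl

theorem opdRobustMatrix_mulVec_apply (z : Fin m → ℝ) (data : Fin n → RAPData k m) (t : Fin n)
    (x : Fin k → ℝ) (j : Fin m) :
    (opdRobustMatrix z data t *ᵥ x) j =
      (data t).2.1 j ⬝ᵥ x + z j / √n * (diagSqrt ((data t).2.2 j) ⬝ᵥ x) := by
  simp only [opdRobustMatrix, t.isLt, dif_pos, Fin.eta, mulVec, dotProduct, of_apply, diagSqrt,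
    add_mul, Finset.sum_add_distrib, Finset.mul_sum, mul_assoc]

variable {data : Fin n → RAPData k m}

theorem opdRevenue_mem_Icc {cbar : ℝ} (hcbar : 0 ≤ cbar)
    (hc : ∀ t l, (data t).1 l ∈ Set.Icc 0 cbar) (s : ℕ) (l : Fin k) :
    opdRevenue data s l ∈ Set.Icc 0 cbar := by
  unfold opdRevenue
  split_ifs with h
  · exact hc _ l
  · exact ⟨le_rfl, hcbar⟩

theorem abs_opdRobustMatrix_le {z : Fin m → ℝ} {amax κ Z : ℝ} (hamax : 0 ≤ amax) (hZ : 0 ≤ Z)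
    (hz : ∀ j, |z j| ≤ Z) (ha : ∀ t j l, (data t).2.1 j l ∈ Set.Icc 0 amax)
    (hK : ∀ t j l, (data t).2.2 j l l ≤ κ) (s : ℕ) (j : Fin m) (l : Fin k) :
    |opdRobustMatrix z data s j l| ≤ amax + Z * √κ := by
  unfold opdRobustMatrix
  split_ifs with h
  · have hzn : |z j / √n| ≤ Z := by
      rw [abs_div, abs_of_nonneg (Real.sqrt_nonneg _)]
      exact (div_le_self (abs_nonneg _)
        (Real.one_le_sqrt.2 (Nat.one_le_cast.2 (Nat.zero_lt_of_lt h)))).trans (hz j)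
    rw [of_apply]
    refine (abs_add_le _ _).trans (add_le_add ?_ ?_)
    · rw [abs_of_nonneg (ha _ j l).1]; exact (ha _ j l).2
    · rw [abs_mul, abs_of_nonneg (Real.sqrt_nonneg _)]
      exact mul_le_mul hzn (Real.sqrt_le_sqrt (hK _ j l)) (Real.sqrt_nonneg _) hZ
  · rw [Matrix.zero_apply, abs_zero]; positivity

theorem opdOutput_constraint_sub_le (hn : 0 < n) {z b : Fin m → ℝ}
    {cbar amax κ dlow dhigh Z : ℝ} (hcbar : 0 ≤ cbar) (hamax : 0 ≤ amax) (hZ : 0 ≤ Z)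
    (hz : ∀ j, |z j| ≤ Z) (hdlow : 0 < dlow) (hb : ∀ j, b j / n ∈ Set.Icc dlow dhigh)
    (hc : ∀ t l, (data t).1 l ∈ Set.Icc 0 cbar) (ha : ∀ t j l, (data t).2.1 j l ∈ Set.Icc 0 amax)
    (hK : ∀ t j l, (data t).2.2 j l l ∈ Set.Icc 0 κ) (j : Fin m) :
    ∑ t, (data t).2.1 j ⬝ᵥ opdOutput n z b data t
        + z j * √(∑ t, opdOutput n z b data t ⬝ᵥ
            (of ((data t).2.2 j) *ᵥ opdOutput n z b data t)) - b j
      ≤ (√(driftBound cbar (m * (amax + Z * √κ + dhigh) ^ 2) dlow) + Z * √κ / 2) * √n := by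
  set x := opdOutput n z b data
  set B := driftBound cbar (m * (amax + Z * √κ + dhigh) ^ 2) dlow
  set p := opdP n (opdRevenue data) (opdRobustMatrix z data) (fun j => b j / n)
  set s : Fin n → ℝ := fun t => diagSqrt ((data t).2.2 j) ⬝ᵥ x t
  have hsel : ∀ t, IsSelection (x t) := fun t => (opdXseq_spec _ _ _ _ _).1
  have hs : ∀ t, s t ∈ Set.Icc 0 √κ := fun t =>
    (hsel t).dotProduct_mem_Icc (Real.sqrt_nonneg _)
      fun l => ⟨Real.sqrt_nonneg _, Real.sqrt_le_sqrt (hK t j l).2⟩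
  have hquad : ∑ t, x t ⬝ᵥ (of ((data t).2.2 j) *ᵥ x t) = ∑ t, s t ^ 2 :=
    Finset.sum_congr rfl fun t _ => (hsel t).dotProduct_mulVec_eq_sq fun l => (hK t j l).1
  have hrow : ∑ t, (data t).2.1 j ⬝ᵥ x t
      = ∑ t : Fin n, (opdRobustMatrix z data t *ᵥ x t) j - z j / √n * ∑ t, s t := by
    simp only [opdRobustMatrix_mulVec_apply, Finset.sum_add_distrib, ← Finset.mul_sum,
      add_sub_cancel_right, s]
  have hprice : p n j ≤ √B := Real.le_sqrt_of_sq_le <|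
    (Finset.single_le_sum (fun j _ => sq_nonneg (p n j)) (Finset.mem_univ j)).trans
      (sum_sq_opdP_le hn hcbar (opdRevenue_mem_Icc hcbar hc) (by positivity)
        (abs_opdRobustMatrix_le hamax hZ hz ha fun t j l => (hK t j l).2) hdlow hb n)
  have hspent : ∑ t : Fin n, (opdRobustMatrix z data t *ᵥ x t) j ≤ b j + √n * √B := by
    have htel : ∑ t : Fin n, ((opdRobustMatrix z data t *ᵥ x t) j - b j / n) ≤ √n * p n j :=
      (Fin.sum_univ_eq_sum_range _ n).trans_le <| sum_range_mulVec_opdXseq_sub_le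
        (opdRevenue data) (opdRobustMatrix z data) (fun j => b j / n) hn n j
    rw [Finset.sum_sub_distrib, Finset.sum_const, Finset.card_univ, Fintype.card_fin,
      nsmul_eq_mul, mul_div_cancel₀ _ (by positivity)] at htel
    nlinarith [Real.sqrt_nonneg n]
  have hgap := sqrt_sum_sq_sub_sum_div_sqrt_card_mem hs
  rw [Fintype.card_fin] at hgap
  have hz_gap : z j * (√(∑ t, s t ^ 2) - (∑ t, s t) / √n) ≤ Z * (√κ * √n / 2) :=
    mul_le_mul ((le_abs_self _).trans (hz j)) hgap.2 hgap.1 hZ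
  calc _ = (∑ t : Fin n, (opdRobustMatrix z data t *ᵥ x t) j - b j)
        + z j * (√(∑ t, s t ^ 2) - (∑ t, s t) / √n) := by
        rw [hrow, hquad]; ring
    _ ≤ (√B + Z * √κ / 2) * √n := by nlinarith

end Output

theorem opd_constraint_violation_bound_general
    (k m : ℕ)
    (cbar amax κ : ℝ) (hcbar : 0 < cbar) (hamax : 0 < amax)
    (η : Fin m → ℝ) (hη : ∀ j, η j ∈ Set.Ico (1/2 : ℝ) 1)
    (dlow dhigh : ℝ) (hdlow : 0 < dlow) :
    ∃ C : ℝ, 0 < C ∧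
      ∀ (n : ℕ), 0 < n →
      ∀ (Ω : Type) (_ : MeasurableSpace Ω) (P : Measure Ω), IsProbabilityMeasure P →
      ∀ (ξ : Fin n → Ω → RAPData k m),
        (∀ t, Measurable (ξ t)) →
        iIndepFun ξ P →
        (∀ s t, IdentDistrib (ξ s) (ξ t) P P) →
        (∀ ω t l, (ξ t ω).1 l ∈ Set.Icc 0 cbar) →
        (∀ ω t j l, (ξ t ω).2.1 j l ∈ Set.Icc 0 amax) →
        (∀ ω t j, (Matrix.of ((ξ t ω).2.2 j)).PosSemidef) →
        (∀ ω t j l l', |(ξ t ω).2.2 j l l'| ≤ κ) →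
      ∀ (b : Fin m → ℝ), (∀ j, dlow ≤ b j / n ∧ b j / n ≤ dhigh) →
      ∀ (z : Fin m → ℝ), (∀ j, (gaussianReal 0 1) (Set.Iic (z j)) = ENNReal.ofReal (η j)) →
        ∫ ω, Real.sqrt (∑ j,
            (max (∑ t, (ξ t ω).2.1 j ⬝ᵥ opdOutput n z b (fun t' => ξ t' ω) t
              + z j * Real.sqrt (∑ t, opdOutput n z b (fun t' => ξ t' ω) t ⬝ᵥ
                  (Matrix.of ((ξ t ω).2.2 j)).mulVec (opdOutput n z b (fun t' => ξ t' ω) t))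
              - b j) 0) ^ 2) ∂P
          ≤ C * Real.sqrt n := by
  choose Z hZ₀ hZ using fun j => exists_abs_le_of_measure_Iic_eq (gaussianReal 0 1)
    ((by norm_num : (0 : ℝ) < 1 / 2).trans_le (hη j).1) (hη j).2
  set Zmax := ∑ j, Z j
  have hZmax : 0 ≤ Zmax := Finset.sum_nonneg fun j _ => hZ₀ j
  set C := √m * (√(driftBound cbar (m * (amax + Zmax * √κ + dhigh) ^ 2) dlow) + Zmax * √κ / 2)
  refine ⟨C + 1, by positivity, fun n hn Ω _ P _ ξ _ _ _ hc ha hK hKb b hb z hz => ?_⟩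
  have hz_le : ∀ j, |z j| ≤ Zmax := fun j =>
    (hZ j _ (hz j)).trans (Finset.single_le_sum (fun j _ => hZ₀ j) (Finset.mem_univ j))
  have hdiag : ∀ ω t j l, (ξ t ω).2.2 j l l ∈ Set.Icc 0 κ := fun ω t j l =>
    ⟨by simpa using (hK ω t j).diag_nonneg (i := l), (le_abs_self _).trans (hKb ω t j l l)⟩
  have hviolation : ∀ ω, ‖√(∑ j,
      (max (∑ t, (ξ t ω).2.1 j ⬝ᵥ opdOutput n z b (fun t' => ξ t' ω) t
        + z j * √(∑ t, opdOutput n z b (fun t' => ξ t' ω) t ⬝ᵥ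
            (of ((ξ t ω).2.2 j)) *ᵥ (opdOutput n z b (fun t' => ξ t' ω) t))
        - b j) 0) ^ 2)‖ ≤ C * √n := fun ω => by
    rw [Real.norm_of_nonneg (Real.sqrt_nonneg _), mul_assoc]
    simpa using sqrt_sum_sq_max_zero_le_sqrt_card_mul (by positivity) fun j =>
      opdOutput_constraint_sub_le hn hcbar.le hamax.le hZmax hz_le hdlow hb (hc ω) (ha ω)
        (hdiag ω) j
  calc _ ≤ C * √n * P.real Set.univ :=
        (Real.le_norm_self _).trans (norm_integral_le_of_norm_le_const (ae_of_all _ hviolation))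
    _ ≤ (C + 1) * √n := by
        rw [probReal_univ, mul_one]; gcongr; linarith

/-- **Theorem 1 (constraint-violation bound).** For fixed dimensions `k, m`, bounds
`c̄, ā_max, κ`, confidence levels `η_j ∈ [1/2, 1)`, and capacity bounds `0 < d̲ ≤ d̄`,
there is a constant `C > 0` such that for every horizon `n`, every capacity vector `b`
with `d̲ ≤ b_j/n ≤ d̄`, and every i.i.d. bounded data sequence
`(c_t, (ā_{tj})_j, (K_{tj})_j)` with `K_{tj}` symmetric positive semidefinite, the output
`x` of the online primal-dual algorithm satisfies `E[‖(g(x) − b)⁺‖₂] ≤ C √n`, where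
`g_j(x) = ∑_t ā_{tj}ᵀ x_t + Φ⁻¹(η_j) √(∑_t x_tᵀ K_{tj} x_t)` are the second-order cone
constraint functions, `(·)⁺` is the componentwise positive part, and `‖·‖₂` the
Euclidean norm on `ℝ^m`.  Here `z_j = Φ⁻¹(η_j)`. -/
theorem opd_constraint_violation_bound
    (k m : ℕ) (hk : 0 < k) (hm : 0 < m)
    (cbar amax κ : ℝ) (hcbar : 0 < cbar) (hamax : 0 < amax) (hκ : 0 < κ)
    (η : Fin m → ℝ) (hη : ∀ j, η j ∈ Set.Ico (1/2 : ℝ) 1)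
    (dlow dhigh : ℝ) (hdlow : 0 < dlow) (hd : dlow ≤ dhigh) :
    ∃ C : ℝ, 0 < C ∧
      ∀ (n : ℕ), 0 < n →
      ∀ (Ω : Type) (_ : MeasurableSpace Ω) (P : Measure Ω), IsProbabilityMeasure P →
      ∀ (ξ : Fin n → Ω → RAPData k m),
        (∀ t, Measurable (ξ t)) →
        iIndepFun ξ P →
        (∀ s t, IdentDistrib (ξ s) (ξ t) P P) →
        (∀ ω t l, (ξ t ω).1 l ∈ Set.Icc 0 cbar) →
        (∀ ω t j l, (ξ t ω).2.1 j l ∈ Set.Icc 0 amax) →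
        (∀ ω t j, (Matrix.of ((ξ t ω).2.2 j)).PosSemidef) →
        (∀ ω t j l l', |(ξ t ω).2.2 j l l'| ≤ κ) →
      ∀ (b : Fin m → ℝ), (∀ j, dlow ≤ b j / n ∧ b j / n ≤ dhigh) →
      ∀ (z : Fin m → ℝ), (∀ j, (gaussianReal 0 1) (Set.Iic (z j)) = ENNReal.ofReal (η j)) →
        ∫ ω, Real.sqrt (∑ j,
            (max (∑ t, (ξ t ω).2.1 j ⬝ᵥ opdOutput n z b (fun t' => ξ t' ω) t
              + z j * Real.sqrt (∑ t, opdOutput n z b (fun t' => ξ t' ω) t ⬝ᵥ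
                  (Matrix.of ((ξ t ω).2.2 j)).mulVec (opdOutput n z b (fun t' => ξ t' ω) t))
              - b j) 0) ^ 2) ∂P
          ≤ C * Real.sqrt n :=
  opd_constraint_violation_bound_general k m cbar amax κ hcbar hamax η hη dlow dhigh hdlow
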